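/- arXiv:1805.08024 — 2 statements merged into one kernel-verified Lean document; each statement's English description precedes it below -/
import Mathlib

section
/- Let φ : ℝ² → ℝ ∪ {+∞} be lower semicontinuous with {x : φ(x) < +∞} a nonempty subset of the unit circle S¹. Let ξ₁ ≠ ξ₂ be points of S¹ such that φ(ξ) = +∞ for every ξ in one of the two open arcs of S¹ with endpoints ξ₁ and ξ₂. Then for every t ∈ (0,1), conv(φ)((1−t)ξ₁ + t ξ₂) = (1−t)·φ(ξ₁) + t·φ(ξ₂), where the right-hand side is computed in ℝ ∪ {+∞} (so it equals +∞ if either φ(ξ₁) or φ(ξ₂) is +∞). -/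
open Set MeasureTheory
open scoped Topology ENNReal

noncomputable section

/-- The plane ℝ² with the Euclidean inner product. -/
abbrev E2 := EuclideanSpace ℝ (Fin 2)

/-- The unit circle S¹ ⊂ ℝ². -/
def S1 : Set E2 := Metric.sphere 0 1

/-- The closed unit disk 𝔻̄ ⊂ ℝ². -/
def cDisk : Set E2 := Metric.closedBall 0 1

/-- The essential domain of a function `u : ℝ² → ℝ ∪ {+∞}`. -/
def essDom (u : E2 → EReal) : Set E2 := {x | u x < ⊤}

/-- The domain of support `Ω_u`: the interior of the essential domain. -/
def suppDom (u : E2 → EReal) : Set E2 := interior (essDom u)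

/-- The subdifferential of `u` at `x`. -/
def subdiff (u : E2 → EReal) (x : E2) : Set E2 :=
  {p | ∀ z : E2, u x + ((inner ℝ p (z - x) : ℝ) : EReal) ≤ u z}

/-- The Monge–Ampère measure of `u` on a set `ω`. -/
def MAmeasure (u : E2 → EReal) (ω : Set E2) : ℝ≥0∞ :=
  volume (⋃ x ∈ ω, subdiff u x)

/-- `u` is gradient-surjective: the subdifferentials over Ω_u cover ℝ². -/
def GradientSurjective (u : E2 → EReal) : Prop :=
  ⋃ x ∈ suppDom u, subdiff u x = univ

/-- The convex envelope: pointwise sup of affine minorants. -/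
def convEnv (φ : E2 → EReal) (x : E2) : EReal :=
  ⨆ ℓ ∈ {ℓ : E2 →ᵃ[ℝ] ℝ | ∀ y, (ℓ y : EReal) ≤ φ y}, ((ℓ x : ℝ) : EReal)

/-- Ω_φ: the interior of the convex hull of the finiteness set of φ on S¹. -/
def OmegaPhi (φ : E2 → EReal) : Set E2 :=
  interior (convexHull ℝ {ξ ∈ S1 | φ ξ < ⊤})

/-- Convexity of an ℝ ∪ {+∞}-valued function, via convexity of the epigraph. -/
def IsConvexEReal (u : E2 → EReal) : Prop :=
  Convex ℝ {p : E2 × ℝ | u p.1 ≤ (p.2 : EReal)}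

/-- Proper closed convex function with values in ℝ ∪ {+∞}. -/
def IsClosedProperConvex (u : E2 → EReal) : Prop :=
  (∃ x, u x ≠ ⊤) ∧ (∀ x, u x ≠ ⊥) ∧ LowerSemicontinuous u ∧ IsConvexEReal u

/-- The Hessian determinant det D²f of a real function on ℝ². -/
def hessDet (f : E2 → ℝ) (z : E2) : ℝ :=
  Matrix.det (Matrix.of fun i j : Fin 2 =>
    fderiv ℝ (fun w => fderiv ℝ f w (EuclideanSpace.single i 1)) z (EuclideanSpace.single j 1))

/-- φ is admissible boundary data: φ : S¹ → ℝ ∪ {+∞} (extended by +∞ off S¹),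
lower semicontinuous and finite at at least three distinct points. -/
def IsAdmissiblePhi (φ : E2 → EReal) : Prop :=
  (∀ x, x ∉ S1 → φ x = ⊤) ∧ (∀ x, φ x ≠ ⊥) ∧ LowerSemicontinuous φ ∧
  ∃ ξ₁ ∈ S1, ∃ ξ₂ ∈ S1, ∃ ξ₃ ∈ S1,
    ξ₁ ≠ ξ₂ ∧ ξ₁ ≠ ξ₃ ∧ ξ₂ ≠ ξ₃ ∧ φ ξ₁ ≠ ⊤ ∧ φ ξ₂ ≠ ⊤ ∧ φ ξ₃ ≠ ⊤

/-- A solution of the Minkowski problem with data (φ, ψ). -/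
def IsMinkowskiSolution (φ : E2 → EReal) (ψ : E2 → ℝ) (u : E2 → EReal) : Prop :=
  IsClosedProperConvex u ∧
  (∀ z, z ∉ OmegaPhi φ → u z = convEnv φ z) ∧
  (∀ z ∈ OmegaPhi φ, u z ≠ ⊤) ∧
  ContDiffOn ℝ 2 (fun z => (u z).toReal) (OmegaPhi φ) ∧
  ∀ z ∈ OmegaPhi φ, hessDet (fun w => (u w).toReal) z
    = (1 / ψ z) * ((1 - ‖z‖ ^ 2) ^ 2)⁻¹

/-!
Every affine minorant `ℓ` of `φ` satisfies `ℓ((1 - t) ξ₁ + t ξ₂) = (1 - t) ℓ(ξ₁) + t ℓ(ξ₂)`,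
which gives `≤`.
Conversely, for `a < φ(ξ₁)` and `b < φ(ξ₂)` let `ℓ₀` be affine with `ℓ₀(ξ₁) = a`, `ℓ₀(ξ₂) = b`,
and try `ℓ₀ - M (⟪p, ·⟫ - c)`. Off the closed arc `{ξ ∈ S¹ | c ≤ ⟪p, ξ⟫}` the function `φ` is
`+∞`; on that arc the penalty is nonnegative and vanishes only at `ξ₁, ξ₂` (a line meets a circle
in at most two points), where `ℓ₀ < φ`. Lower semicontinuity of `φ` and compactness of the arc
then give one `M` that works on the whole arc.
-/

open Module
open scoped RealInnerProductSpace

theorem isOpen_setOf_lt_of_semicontinuous {X α : Type*} [TopologicalSpace X] [LinearOrder α]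
    [TopologicalSpace α] [OrderTopology α] [DenselyOrdered α] {f g : X → α}
    (hf : UpperSemicontinuous f) (hg : LowerSemicontinuous g) : IsOpen {x | f x < g x} := by
  refine isOpen_iff_mem_nhds.2 fun x (hx : f x < g x) => ?_
  obtain ⟨r, hfr, hrg⟩ := exists_between hx
  filter_upwards [hf x r hfr, hg x r hrg] with y hfy hgy using hfy.trans hgy

theorem LowerSemicontinuous.exists_sub_mul_lt_of_isCompact {X : Type*} [TopologicalSpace X]
    {φ : X → EReal} (hφ : LowerSemicontinuous φ) {K : Set X} (hK : IsCompact K)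
    (hbot : ∀ x ∈ K, φ x ≠ ⊥) {g h : X → ℝ} (hg : Continuous g) (hh : Continuous h)
    (hh0 : ∀ x ∈ K, 0 ≤ h x) (hzero : ∀ x ∈ K, h x = 0 → (g x : EReal) < φ x) :
    ∃ M : ℝ, ∀ x ∈ K, ((g x - M * h x : ℝ) : EReal) < φ x := by
  set U : ℕ → Set X := fun n => {x | h x < 0} ∪ {x | ((g x - n * h x : ℝ) : EReal) < φ x}
  have hU_open (n : ℕ) : IsOpen (U n) :=
    (isOpen_lt hh continuous_const).union <| isOpen_setOf_lt_of_semicontinuous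
      (continuous_coe_real_ereal.comp (hg.sub (continuous_const.mul hh))).upperSemicontinuous hφ
  have hU_mono : Monotone U := by
    intro m n hmn x hx
    rcases lt_or_ge (h x) 0 with hneg | hnonneg
    · exact Or.inl hneg
    refine Or.inr (lt_of_le_of_lt (EReal.coe_le_coe_iff.2 ?_) (hx.resolve_left hnonneg.not_gt))
    have : (m : ℝ) ≤ n := by exact_mod_cast hmn
    nlinarith
  have hK_cover : K ⊆ ⋃ n, U n := by
    intro x hxK
    refine mem_iUnion.2 ?_
    rcases (hh0 x hxK).eq_or_lt with hx0 | hpos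
    · exact ⟨0, Or.inr (by simpa [← hx0] using hzero x hxK hx0.symm)⟩
    induction hφx : φ x with
    | bot => exact absurd hφx (hbot x hxK)
    | top => exact ⟨0, Or.inr (by simp [hφx])⟩
    | coe r =>
      obtain ⟨n, hn⟩ := exists_nat_gt ((g x - r) / h x)
      refine ⟨n, Or.inr ?_⟩
      simp only [mem_ofPred_eq, hφx, EReal.coe_lt_coe_iff]
      rw [div_lt_iff₀ hpos] at hn
      linarith
  obtain ⟨n, hn⟩ := hK.elim_directed_cover U hU_open hK_cover hU_mono.directed_le
  exact ⟨n, fun x hxK => (hn hxK).resolve_left (hh0 x hxK).not_gt⟩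

theorem EReal.coe_mul_add_coe_mul_le_of_forall_lt {s t : ℝ} (hs : 0 < s) (ht : 0 < t)
    {A B C : EReal}
    (h : ∀ a b : ℝ, (a : EReal) < A → (b : EReal) < B → ((s * a + t * b : ℝ) : EReal) ≤ C) :
    (s : EReal) * A + t * B ≤ C := by
  refine EReal.add_le_of_forall_lt fun a' ha' b' hb' => ?_
  induction a' with
  | bot => simp
  | top => exact absurd ha' not_top_lt
  | coe a =>
  induction b' with
  | bot => simp
  | top => exact absurd hb' not_top_lt
  | coe b =>
  have key := h (a / s) (b / t) ?_ ?_
  · rw [← EReal.coe_add]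
    convert key using 2
    field_simp
  · rw [EReal.coe_div, EReal.div_lt_iff (by exact_mod_cast hs) (EReal.coe_ne_top s), mul_comm]
    exact ha'
  · rw [EReal.coe_div, EReal.div_lt_iff (by exact_mod_cast ht) (EReal.coe_ne_top t), mul_comm]
    exact hb'

theorem exists_affineMap_apply_eq_apply_eq {K V : Type*} [Field K] [AddCommGroup V] [Module K V]
    {x₁ x₂ : V} (hx : x₁ ≠ x₂) (a b : K) : ∃ ℓ : V →ᵃ[K] K, ℓ x₁ = a ∧ ℓ x₂ = b := by
  obtain ⟨f, hf⟩ : ∃ f : Module.Dual K V, f (x₂ - x₁) = 1 := by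
    obtain ⟨f, hf⟩ : ∃ f : Module.Dual K V, f (x₂ - x₁) ≠ 0 := by
      by_contra! h
      exact hx (sub_eq_zero.1 ((Module.forall_dual_apply_eq_zero_iff K _).1 h)).symm
    exact ⟨(f (x₂ - x₁))⁻¹ • f, by rw [LinearMap.smul_apply, smul_eq_mul, inv_mul_cancel₀ hf]⟩
  refine ⟨((b - a) • f).toAffineMap + AffineMap.const K V (a - (b - a) * f x₁), ?_, ?_⟩
  · simp
  · rw [map_sub] at hf
    simp only [AffineMap.coe_add, LinearMap.coe_toAffineMap, Pi.add_apply, LinearMap.smul_apply,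
      smul_eq_mul, AffineMap.const_apply]
    linear_combination (b - a) * hf

theorem eq_or_eq_of_mem_sphere_of_inner_eq {V : Type*} [NormedAddCommGroup V]
    [InnerProductSpace ℝ V] [Fact (finrank ℝ V = 2)] {p : V} (hp : p ≠ 0) {z : V} {r : ℝ}
    {x₁ x₂ x : V} (h₁ : x₁ ∈ Metric.sphere z r) (h₂ : x₂ ∈ Metric.sphere z r)
    (hx : x ∈ Metric.sphere z r) (h12 : x₁ ≠ x₂) (e₁ : ⟪p, x₁⟫ = ⟪p, x⟫)
    (e₂ : ⟪p, x₂⟫ = ⟪p, x⟫) :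
    x = x₁ ∨ x = x₂ := by
  have : FiniteDimensional ℝ V := .of_fact_finrank_eq_two
  by_contra! hne
  have hind : AffineIndependent ℝ ![x₁, x₂, x] :=
    EuclideanGeometry.Cospherical.affineIndependent_of_ne
      ⟨z, r, by rintro _ (rfl | rfl | rfl) <;> assumption⟩ h12 hne.1.symm hne.2.symm
  refine affineIndependent_iff_not_collinear_set.1 hind (collinear_iff_finrank_le_one.2 ?_)
  have hspan : vectorSpan ℝ {x₁, x₂, x} ≤ (ℝ ∙ p)ᗮ := by
    refine Submodule.span_le.2 ?_
    rintro _ ⟨u, hu, w, hw, rfl⟩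
    rw [SetLike.mem_coe, Submodule.mem_orthogonal_singleton_iff_inner_right]
    change ⟪p, u - w⟫ = 0
    rw [inner_sub_right]
    rcases hu with rfl | rfl | rfl <;> rcases hw with rfl | rfl | rfl <;> simp [e₁, e₂]
  exact (Submodule.finrank_mono hspan).trans (Submodule.finrank_orthogonal_span_singleton hp).le

theorem exists_affine_minorant_of_eq_top_on_arc {V : Type*} [NormedAddCommGroup V]
    [InnerProductSpace ℝ V] [Fact (finrank ℝ V = 2)] {φ : V → EReal}
    (hlsc : LowerSemicontinuous φ) (hbot : ∀ x, φ x ≠ ⊥) {z : V} {r : ℝ}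
    (hsub : {x | φ x ≠ ⊤} ⊆ Metric.sphere z r) {ξ₁ ξ₂ : V} (h₁ : ξ₁ ∈ Metric.sphere z r)
    (h₂ : ξ₂ ∈ Metric.sphere z r) (h12 : ξ₁ ≠ ξ₂) {p : V} {c : ℝ} (hp : p ≠ 0)
    (e₁ : ⟪p, ξ₁⟫ = c) (e₂ : ⟪p, ξ₂⟫ = c)
    (harc : ∀ ξ ∈ Metric.sphere z r, ⟪p, ξ⟫ < c → φ ξ = ⊤)
    {a b : ℝ} (ha : (a : EReal) < φ ξ₁) (hb : (b : EReal) < φ ξ₂) :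
    ∃ ℓ : V →ᵃ[ℝ] ℝ, (∀ y, (ℓ y : EReal) ≤ φ y) ∧ ℓ ξ₁ = a ∧ ℓ ξ₂ = b := by
  have : FiniteDimensional ℝ V := .of_fact_finrank_eq_two
  obtain ⟨ℓ₀, hℓ₁, hℓ₂⟩ := exists_affineMap_apply_eq_apply_eq h12 a b
  have hinner : Continuous fun y : V => ⟪p, y⟫ := continuous_const.inner continuous_id
  have hK : IsCompact (Metric.sphere z r ∩ {y | c ≤ ⟪p, y⟫}) :=
    (isCompact_sphere z r).inter_right (isClosed_le continuous_const hinner)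
  obtain ⟨M, hM⟩ := hlsc.exists_sub_mul_lt_of_isCompact (h := fun y => ⟪p, y⟫ - c) hK
    (fun x _ => hbot x) ℓ₀.continuous_of_finiteDimensional (hinner.sub continuous_const)
    (fun y hy => sub_nonneg.2 hy.2) fun y hy hy0 => by
      rcases eq_or_eq_of_mem_sphere_of_inner_eq hp h₁ h₂ hy.1 h12 (by linarith) (by linarith)
        with rfl | rfl
      · rwa [hℓ₁]
      · rwa [hℓ₂]
  refine ⟨ℓ₀ - M • ((innerₛₗ ℝ p).toAffineMap - AffineMap.const ℝ V c), fun y => ?_, ?_, ?_⟩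
  · by_cases hy : φ y = ⊤
    · exact hy ▸ le_top
    have hyc : c ≤ ⟪p, y⟫ := not_lt.1 fun hlt => hy (harc y (hsub hy) hlt)
    simpa using (hM y ⟨hsub hy, hyc⟩).le
  · simp [hℓ₁, e₁]
  · simp [hℓ₂, e₂]

theorem le_convEnv {φ : E2 → EReal} {ℓ : E2 →ᵃ[ℝ] ℝ} (hℓ : ∀ y, (ℓ y : EReal) ≤ φ y) (x : E2) :
    (ℓ x : EReal) ≤ convEnv φ x :=
  le_iSup₂ (f := fun ℓ (_ : ∀ y, (ℓ y : EReal) ≤ φ y) => ((ℓ x : ℝ) : EReal)) ℓ hℓ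

theorem convEnv_lineMap_le (φ : E2 → EReal) (x₁ x₂ : E2) {t : ℝ} (ht₀ : 0 ≤ t) (ht₁ : t ≤ 1) :
    convEnv φ (AffineMap.lineMap x₁ x₂ t) ≤ ((1 - t : ℝ) : EReal) * φ x₁ + (t : EReal) * φ x₂ := by
  refine iSup₂_le fun ℓ hℓ => ?_
  rw [ℓ.apply_lineMap, AffineMap.lineMap_apply_ring, EReal.coe_add, EReal.coe_mul, EReal.coe_mul]
  exact add_le_add (mul_le_mul_of_nonneg_left (hℓ x₁) (EReal.coe_nonneg.2 (sub_nonneg.2 ht₁)))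
    (mul_le_mul_of_nonneg_left (hℓ x₂) (EReal.coe_nonneg.2 ht₀))

theorem convEnv_affine_on_chord_general
    (φ : E2 → EReal) (hlsc : LowerSemicontinuous φ) (hbot : ∀ x, φ x ≠ ⊥)
    (hsub : {x | φ x ≠ ⊤} ⊆ S1)
    (ξ₁ ξ₂ : E2) (h₁ : ξ₁ ∈ S1) (h₂ : ξ₂ ∈ S1) (h12 : ξ₁ ≠ ξ₂)
    (harc : ∃ (p : E2) (c : ℝ), p ≠ 0 ∧ (inner ℝ p ξ₁ : ℝ) = c ∧ (inner ℝ p ξ₂ : ℝ) = c ∧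
      ∀ ξ ∈ S1, (inner ℝ p ξ : ℝ) < c → φ ξ = ⊤) :
    ∀ t ∈ Ioo (0:ℝ) 1,
      convEnv φ ((1 - t) • ξ₁ + t • ξ₂)
        = ((1 - t : ℝ) : EReal) * φ ξ₁ + ((t : ℝ) : EReal) * φ ξ₂ := by
  obtain ⟨p, c, hp, e₁, e₂, harc⟩ := harc
  have : Fact (finrank ℝ E2 = 2) := ⟨finrank_euclideanSpace_fin⟩
  rintro t ⟨ht₀, ht₁⟩
  rw [← AffineMap.lineMap_apply_module]
  refine le_antisymm (convEnv_lineMap_le φ ξ₁ ξ₂ ht₀.le ht₁.le) ?_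
  refine EReal.coe_mul_add_coe_mul_le_of_forall_lt (sub_pos.2 ht₁) ht₀ fun a b ha hb => ?_
  obtain ⟨ℓ, hℓ, rfl, rfl⟩ := exists_affine_minorant_of_eq_top_on_arc hlsc hbot hsub h₁ h₂ h12 hp
    e₁ e₂ harc ha hb
  rw [← AffineMap.lineMap_apply_ring, ← ℓ.apply_lineMap]
  exact le_convEnv hℓ _

/-- if φ = +∞ on one of the two open arcs of S¹ with endpoints ξ₁, ξ₂
(an arc being the portion of S¹ strictly on one side of the secant line through
ξ₁ and ξ₂), then the convex envelope of φ is, on the open chord (ξ₁, ξ₂), the affine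
interpolation of φ(ξ₁) and φ(ξ₂) (equal to +∞ if either value is +∞). -/
theorem convEnv_affine_on_chord
    (φ : E2 → EReal) (hlsc : LowerSemicontinuous φ) (hbot : ∀ x, φ x ≠ ⊥)
    (hne : {x | φ x ≠ ⊤}.Nonempty) (hsub : {x | φ x ≠ ⊤} ⊆ S1)
    (ξ₁ ξ₂ : E2) (h₁ : ξ₁ ∈ S1) (h₂ : ξ₂ ∈ S1) (h12 : ξ₁ ≠ ξ₂)
    (harc : ∃ (p : E2) (c : ℝ), p ≠ 0 ∧ (inner ℝ p ξ₁ : ℝ) = c ∧ (inner ℝ p ξ₂ : ℝ) = c ∧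
      ∀ ξ ∈ S1, (inner ℝ p ξ : ℝ) < c → φ ξ = ⊤) :
    ∀ t ∈ Ioo (0:ℝ) 1,
      convEnv φ ((1 - t) • ξ₁ + t • ξ₂)
        = ((1 - t : ℝ) : EReal) * φ ξ₁ + ((t : ℝ) : EReal) * φ ξ₂ :=
  convEnv_affine_on_chord_general φ hlsc hbot hsub ξ₁ ξ₂ h₁ h₂ h12 harc

end
end

section
/- Let f : ℝ² → ℝ be C¹ with ‖∇f(x)‖ < 1 for every x ∈ ℝ², let Σ be its graph, and let D_Σ be its domain of dependence. Then exactly one of the following holds: (1) D_Σ = ℝ³; (2) there exist ξ ∈ S¹ and real numbers c' < c with D_Σ = {x ∈ ℝ³ : c' < x₁ξ₁ + x₂ξ₂ − x₃ < c} (the region between two parallel null planes); (3) there is a nonempty family F ⊆ S¹ × ℝ with D_Σ = ⋂_{(ξ,c) ∈ F} {x ∈ ℝ³ : x₁ξ₁ + x₂ξ₂ − x₃ < c} (an intersection of futures of null planes); (4) there is a nonempty family F ⊆ S¹ × ℝ with D_Σ = ⋂_{(ξ,c) ∈ F} {x ∈ ℝ³ : x₁ξ₁ + x₂ξ₂ −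 x₃ > c} (an intersection of pasts of null planes). -/
open Set MeasureTheory
open scoped Topology ENNReal

noncomputable section

/-- Minkowski 3-space ℝ^{2,1}, identified with ℝ² × ℝ. -/
abbrev M3 := E2 × ℝ

/-!
A point `p` lies in the domain of dependence iff it lies strictly in the future of every null plane
below the graph and strictly in the past of every null plane above it. The null line through `p`
meets the graph, and at that point a null plane through `p` lying on one side of the graph would
touch it, which `‖∇f‖ < 1` forbids. Conversely, a causal curve through `p` missing the graph stays
on one side of it, and a limit of the unit directions from `p` to the far points of the curve
(compactness of `S¹`) is the direction of a null plane through `p` on that side of the graph.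

A null plane below and one above the graph are parallel, since `⟪x, ξ - η⟫` is bounded. So the
domain is `ℝ³`, a slab, or an intersection of futures or of pasts according to which families are
empty; the four shapes are told apart by invariance under upward and downward time translations.
-/

open Filter RealInnerProductSpace

theorem forall_lt_or_forall_gt_of_forall_ne {X α : Type*} [TopologicalSpace X] [PreconnectedSpace X]
    [LinearOrder α] [TopologicalSpace α] [OrderClosedTopology α] {f g : X → α}
    (hf : Continuous f) (hg : Continuous g) (hne : ∀ x, f x ≠ g x) :
    (∀ x, f x < g x) ∨ ∀ x, g x < f x := by
  by_contra! h
  obtain ⟨⟨a, ha⟩, b, hb⟩ := h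
  obtain ⟨x, hx⟩ := intermediate_value_univ₂ hf hg hb ha
  exact hne x hx

theorem LipschitzWith.neg_comp_neg {α β : Type*} [SeminormedAddCommGroup α]
    [SeminormedAddCommGroup β] {K : NNReal} {f : α → β} (hf : LipschitzWith K f) :
    LipschitzWith K fun x => -f (-x) := by
  have h := (hf.comp LipschitzWith.id.neg).neg
  rwa [mul_one] at h

section InnerProductSpace

variable {E : Type*} [NormedAddCommGroup E] [InnerProductSpace ℝ E]

theorem eq_zero_of_forall_inner_le {v : E} {C : ℝ} (h : ∀ x, ⟪x, v⟫ ≤ C) : v = 0 := by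
  by_contra hv
  have hpos : 0 < ‖v‖ ^ 2 := by positivity
  have := h (((C + 1) / ‖v‖ ^ 2) • v)
  rw [real_inner_smul_left, real_inner_self_eq_norm_sq, div_mul_cancel₀ _ hpos.ne'] at this
  linarith

theorem norm_add_smul_le {v η : E} (hη : ‖η‖ = 1) {R : ℝ} (hR : 0 < R) :
    ‖v + R • η‖ ≤ R + ⟪v, η⟫ + ‖v‖ ^ 2 / (2 * R) := by
  have hd : 2 * R * (‖v‖ ^ 2 / (2 * R)) = ‖v‖ ^ 2 := by field_simp
  have hsq : ‖v + R • η‖ ^ 2 = ‖v‖ ^ 2 + 2 * R * ⟪v, η⟫ + R ^ 2 := by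
    rw [norm_add_sq_real, real_inner_smul_right, norm_smul, Real.norm_of_nonneg hR.le, hη]
    ring
  have hinner : -‖v‖ ≤ ⟪v, η⟫ := by
    have := abs_real_inner_le_norm v η
    rw [hη, mul_one] at this
    exact neg_le_of_abs_le this
  -- `R - ‖v‖ + ‖v‖² / 2R = ((R - ‖v‖)² + R²) / 2R` keeps the right-hand side nonnegative.
  have hrhs : 0 ≤ R + ⟪v, η⟫ + ‖v‖ ^ 2 / (2 * R) := by
    nlinarith [sq_nonneg (R - ‖v‖)]
  refine le_of_sq_le_sq ?_ hrhs
  nlinarith [sq_nonneg (⟪v, η⟫ + ‖v‖ ^ 2 / (2 * R))]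

end InnerProductSpace

def domainOfDependence {E : Type*} [PseudoEMetricSpace E] (f : E → ℝ) : Set (E × ℝ) :=
  {p | ∀ c : ℝ → E, LipschitzWith 1 c → c p.2 = p.1 → ∃ t, f (c t) = t}

theorem mk_mem_domainOfDependence {E : Type*} [PseudoEMetricSpace E] (f : E → ℝ) (x : E) :
    (x, f x) ∈ domainOfDependence f :=
  fun _ _ hc => ⟨f x, by rw [hc]⟩

section DomainOfDependence

variable {E : Type*} [NormedAddCommGroup E] [InnerProductSpace ℝ E] {f : E → ℝ}

/-- A pair `(ξ, c)` with `‖ξ‖ = 1` encodes the null plane `{x | ⟪x.1, ξ⟫ - x.2 = c}`, whose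
future is `{x | ⟪x.1, ξ⟫ - x.2 < c}`. -/
def nullPlanesBelow (f : E → ℝ) : Set (E × ℝ) :=
  {q | q.1 ∈ Metric.sphere 0 1 ∧ ∀ x, ⟪x, q.1⟫ - f x ≤ q.2}

def nullPlanesAbove (f : E → ℝ) : Set (E × ℝ) :=
  {q | q.1 ∈ Metric.sphere 0 1 ∧ ∀ x, q.2 ≤ ⟪x, q.1⟫ - f x}

theorem lipschitzWith_null_line (y : E) (s : ℝ) {ξ : E} (hξ : ‖ξ‖ = 1) :
    LipschitzWith 1 fun t : ℝ => y + (t - s) • ξ :=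
  LipschitzWith.of_dist_le_mul fun a b => by
    rw [dist_add_left, dist_eq_norm, ← sub_smul, sub_sub_sub_cancel_right, norm_smul, hξ, mul_one,
      NNReal.coe_one, one_mul, Real.dist_eq, Real.norm_eq_abs]

theorem exists_inner_sub_eq_of_mem_domainOfDependence {p : E × ℝ}
    (hp : p ∈ domainOfDependence f) {ξ : E} (hξ : ‖ξ‖ = 1) :
    ∃ x, ⟪x, ξ⟫ - f x = ⟪p.1, ξ⟫ - p.2 := by
  obtain ⟨t, ht⟩ := hp _ (lipschitzWith_null_line p.1 p.2 hξ) (by simp)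
  refine ⟨p.1 + (t - p.2) • ξ, ?_⟩
  rw [ht, inner_add_left, real_inner_smul_left, real_inner_self_eq_norm_sq, hξ]
  ring

theorem not_isLocalExtr_inner_sub (hf : Differentiable ℝ f) (hgrad : ∀ x, ‖fderiv ℝ f x‖ < 1)
    {ξ : E} (hξ : ‖ξ‖ = 1) (x₀ : E) : ¬IsLocalExtr (fun x => ⟪x, ξ⟫ - f x) x₀ := by
  intro hextr
  have hderiv : HasFDerivAt (fun x => ⟪x, ξ⟫ - f x) (innerSL ℝ ξ - fderiv ℝ f x₀) x₀ := by
    have hinner : (fun x => ⟪x, ξ⟫) = innerSL ℝ ξ := funext fun x => real_inner_comm ξ x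
    exact (hinner ▸ (innerSL ℝ ξ).hasFDerivAt).sub (hf x₀).hasFDerivAt
  have hcrit : innerSL ℝ ξ = fderiv ℝ f x₀ := sub_eq_zero.mp (hextr.hasFDerivAt_eq_zero hderiv)
  have := hgrad x₀
  rw [← hcrit, innerSL_apply_norm, hξ] at this
  exact lt_irrefl 1 this

theorem inner_sub_lt_of_mem_nullPlanesBelow (hf : Differentiable ℝ f)
    (hgrad : ∀ x, ‖fderiv ℝ f x‖ < 1) {q : E × ℝ} (hq : q ∈ nullPlanesBelow f) (x : E) :
    ⟪x, q.1⟫ - f x < q.2 := by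
  refine (hq.2 x).lt_of_ne fun heq => not_isLocalExtr_inner_sub hf hgrad
    (mem_sphere_zero_iff_norm.mp hq.1) x ?_
  have hext : IsMaxOn (fun y => ⟪y, q.1⟫ - f y) univ x :=
    isMaxOn_univ_iff.mpr fun y => heq ▸ hq.2 y
  exact hext.isExtr.isLocalExtr univ_mem

theorem lt_inner_sub_of_mem_nullPlanesAbove (hf : Differentiable ℝ f)
    (hgrad : ∀ x, ‖fderiv ℝ f x‖ < 1) {q : E × ℝ} (hq : q ∈ nullPlanesAbove f) (x : E) :
    q.2 < ⟪x, q.1⟫ - f x := by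
  refine (hq.2 x).lt_of_ne fun heq => not_isLocalExtr_inner_sub hf hgrad
    (mem_sphere_zero_iff_norm.mp hq.1) x ?_
  have hext : IsMinOn (fun y => ⟪y, q.1⟫ - f y) univ x :=
    isMinOn_univ_iff.mpr fun y => heq.symm ▸ hq.2 y
  exact hext.isExtr.isLocalExtr univ_mem

theorem fst_eq_of_mem_nullPlanesBelow_of_mem_nullPlanesAbove {q r : E × ℝ}
    (hq : q ∈ nullPlanesBelow f) (hr : r ∈ nullPlanesAbove f) : q.1 = r.1 := by
  refine sub_eq_zero.mp (eq_zero_of_forall_inner_le (C := q.2 - r.2) fun x => ?_)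
  rw [inner_sub_right]
  linarith [hq.2 x, hr.2 x]

end DomainOfDependence

section CausalCurves

variable {E : Type*} [NormedAddCommGroup E] [InnerProductSpace ℝ E] {f : E → ℝ}

/-- `f` lies below the light cone of the point `(z, t)` above its graph. When `(y, s)` is in the
causal future of `(z, t)`, that cone lies below the null plane through `(y, s)` with direction
`(y - z) / ‖y - z‖`, up to the error `‖x - y‖ ^ 2 / (2 * ‖y - z‖)`. -/
theorem le_add_inner_add_of_lipschitzWith (hf : LipschitzWith 1 f) {y z : E} {s t : ℝ}
    (hz : f z < t) (hyz : ‖y - z‖ ≤ s - t) (hpos : 0 < ‖y - z‖) (x : E) :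
    f x ≤ s + ⟪x - y, ‖y - z‖⁻¹ • (y - z)⟫ + ‖x - y‖ ^ 2 / (2 * ‖y - z‖) := by
  set R := ‖y - z‖
  have hη : ‖R⁻¹ • (y - z)‖ = 1 := by rw [norm_smul, norm_inv, norm_norm, inv_mul_cancel₀ hpos.ne']
  have hsplit : x - z = (x - y) + R • (R⁻¹ • (y - z)) := by
    rw [smul_inv_smul₀ hpos.ne', sub_add_sub_cancel]
  calc f x ≤ f z + ‖x - z‖ := by
        have := hf.dist_le_mul x z
        rw [NNReal.coe_one, one_mul, Real.dist_eq, dist_eq_norm] at this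
        linarith [le_abs_self (f x - f z)]
    _ ≤ t + (R + ⟪x - y, R⁻¹ • (y - z)⟫ + ‖x - y‖ ^ 2 / (2 * R)) := by
        rw [hsplit]
        exact add_le_add hz.le (norm_add_smul_le hη hpos)
    _ ≤ s + ⟪x - y, R⁻¹ • (y - z)⟫ + ‖x - y‖ ^ 2 / (2 * R) := by linarith

theorem exists_mem_nullPlanesAbove_of_forall_lt [ProperSpace E] (hf : LipschitzWith 1 f)
    {c : ℝ → E} (hc : LipschitzWith 1 c) (habove : ∀ t, f (c t) < t) (s : ℝ) :
    ∃ ξ, (ξ, ⟪c s, ξ⟫ - s) ∈ nullPlanesAbove f := by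
  set y := c s
  let t : ℕ → ℝ := fun n => min s (f y - (n + 1))
  let R : ℕ → ℝ := fun n => ‖y - c (t n)‖
  have hRs : ∀ n, R n ≤ s - t n := fun n => by
    have := hc.dist_le_mul s (t n)
    rwa [NNReal.coe_one, one_mul, dist_eq_norm, Real.dist_eq, abs_of_nonneg (by simp [t])] at this
  have hRn : ∀ n : ℕ, (n : ℝ) + 1 ≤ R n := fun n => by
    have := hf.dist_le_mul y (c (t n))
    rw [NNReal.coe_one, one_mul, Real.dist_eq, dist_eq_norm] at this
    linarith [le_abs_self (f y - f (c (t n))), habove (t n), min_le_right s (f y - (n + 1))]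
  have hRpos : ∀ n, 0 < R n := fun n => by linarith [hRn n, (n.cast_nonneg : (0 : ℝ) ≤ n)]
  let η : ℕ → E := fun n => (R n)⁻¹ • (y - c (t n))
  have hη : ∀ n, η n ∈ Metric.sphere (0 : E) 1 := fun n => by
    rw [mem_sphere_zero_iff_norm, norm_smul, norm_inv, norm_norm, inv_mul_cancel₀ (hRpos n).ne']
  obtain ⟨ξ, hξ, φ, hφ, hlim⟩ := (isCompact_sphere (0 : E) 1).tendsto_subseq hη
  refine ⟨ξ, hξ, fun x => ?_⟩
  have hbound : ∀ k, f x ≤ s + ⟪x - y, η (φ k)⟫ + ‖x - y‖ ^ 2 / (2 * R (φ k)) := fun k =>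
    le_add_inner_add_of_lipschitzWith hf (habove _) (hRs _) (hRpos _) x
  have hRφ : Tendsto (fun k => R (φ k)) atTop atTop :=
    tendsto_atTop_mono (fun k => (hRn (φ k)).trans' (by gcongr; exact_mod_cast hφ.le_apply))
      (tendsto_atTop_add_const_right _ 1 tendsto_natCast_atTop_atTop)
  have hrhs : Tendsto (fun k => s + ⟪x - y, η (φ k)⟫ + ‖x - y‖ ^ 2 / (2 * R (φ k))) atTop
      (𝓝 (s + ⟪x - y, ξ⟫ + 0)) :=
    ((tendsto_const_nhds.inner hlim).const_add s).add
      (tendsto_const_nhds.div_atTop (hRφ.const_mul_atTop two_pos))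
  have := ge_of_tendsto' hrhs hbound
  rw [inner_sub_left] at this
  linarith

theorem exists_mem_nullPlanesBelow_of_forall_gt [ProperSpace E] (hf : LipschitzWith 1 f)
    {c : ℝ → E} (hc : LipschitzWith 1 c) (hbelow : ∀ t, t < f (c t)) (s : ℝ) :
    ∃ ξ, (ξ, ⟪c s, ξ⟫ - s) ∈ nullPlanesBelow f := by
  -- Reflect through the origin of spacetime: `x ↦ -f (-x)` and `t ↦ -c (-t)`.
  obtain ⟨ξ, hξ, hle⟩ := exists_mem_nullPlanesAbove_of_forall_lt hf.neg_comp_neg hc.neg_comp_neg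
    (fun t => by simpa using neg_lt_neg (hbelow (-t))) (-s)
  refine ⟨ξ, hξ, fun x => ?_⟩
  have := hle (-x)
  simp only [neg_neg, inner_neg_left] at this
  linarith

theorem exists_mem_nullPlanes_of_notMem_domainOfDependence [ProperSpace E]
    (hf : LipschitzWith 1 f) {p : E × ℝ} (hp : p ∉ domainOfDependence f) :
    ∃ ξ, (ξ, ⟪p.1, ξ⟫ - p.2) ∈ nullPlanesBelow f ∪ nullPlanesAbove f := by
  obtain ⟨c, hc, hcp, hmiss⟩ : ∃ c : ℝ → E, LipschitzWith 1 c ∧ c p.2 = p.1 ∧ ∀ t, f (c t) ≠ t := by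
    simpa [domainOfDependence] using hp
  rw [← hcp]
  rcases forall_lt_or_forall_gt_of_forall_ne (hf.continuous.comp hc.continuous) continuous_id
    hmiss with habove | hbelow
  · obtain ⟨ξ, hξ⟩ := exists_mem_nullPlanesAbove_of_forall_lt hf hc habove p.2
    exact ⟨ξ, Or.inr hξ⟩
  · obtain ⟨ξ, hξ⟩ := exists_mem_nullPlanesBelow_of_forall_gt hf hc hbelow p.2
    exact ⟨ξ, Or.inl hξ⟩

end CausalCurves

section Characterization

variable {E : Type*} [NormedAddCommGroup E] [InnerProductSpace ℝ E] [ProperSpace E] {f : E → ℝ}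

theorem domainOfDependence_eq_biInter (hf : Differentiable ℝ f)
    (hgrad : ∀ x, ‖fderiv ℝ f x‖ < 1) :
    domainOfDependence f =
      (⋂ q ∈ nullPlanesBelow f, {p : E × ℝ | ⟪p.1, q.1⟫ - p.2 < q.2}) ∩
        ⋂ q ∈ nullPlanesAbove f, {p : E × ℝ | q.2 < ⟪p.1, q.1⟫ - p.2} := by
  have hlip : LipschitzWith 1 f := lipschitzWith_of_nnnorm_fderiv_le hf fun x => (hgrad x).le
  ext p
  simp only [mem_inter_iff, mem_iInter₂, mem_ofPred_eq]
  constructor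
  · intro hp
    constructor
    · intro q hq
      obtain ⟨x, hx⟩ := exists_inner_sub_eq_of_mem_domainOfDependence hp
        (mem_sphere_zero_iff_norm.mp hq.1)
      exact hx ▸ inner_sub_lt_of_mem_nullPlanesBelow hf hgrad hq x
    · intro q hq
      obtain ⟨x, hx⟩ := exists_inner_sub_eq_of_mem_domainOfDependence hp
        (mem_sphere_zero_iff_norm.mp hq.1)
      exact hx ▸ lt_inner_sub_of_mem_nullPlanesAbove hf hgrad hq x
  · rintro ⟨hbelow, habove⟩
    by_contra hp
    obtain ⟨ξ, hξ | hξ⟩ := exists_mem_nullPlanes_of_notMem_domainOfDependence hlip hp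
    · exact lt_irrefl _ (hbelow _ hξ)
    · exact lt_irrefl _ (habove _ hξ)

theorem domainOfDependence_eq_slab (hf : Differentiable ℝ f) (hgrad : ∀ x, ‖fderiv ℝ f x‖ < 1)
    {q r : E × ℝ} (hq : q ∈ nullPlanesBelow f) (hr : r ∈ nullPlanesAbove f) :
    ∃ c' c : ℝ, c' < c ∧
      domainOfDependence f = {p | c' < ⟪p.1, q.1⟫ - p.2 ∧ ⟪p.1, q.1⟫ - p.2 < c} := by
  set ξ := q.1
  have hbelow : ∀ q' ∈ nullPlanesBelow f, q'.1 = ξ := fun q' hq' =>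
    (fst_eq_of_mem_nullPlanesBelow_of_mem_nullPlanesAbove hq' hr).trans
      (fst_eq_of_mem_nullPlanesBelow_of_mem_nullPlanesAbove hq hr).symm
  have habove : ∀ r' ∈ nullPlanesAbove f, r'.1 = ξ := fun r' hr' =>
    (fst_eq_of_mem_nullPlanesBelow_of_mem_nullPlanesAbove hq hr').symm
  let g : E → ℝ := fun x => ⟪x, ξ⟫ - f x
  have hbddA : BddAbove (range g) := ⟨q.2, forall_mem_range.mpr hq.2⟩
  have hbddB : BddBelow (range g) :=
    ⟨r.2, forall_mem_range.mpr fun x => by simpa only [habove r hr] using hr.2 x⟩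
  have hslab :
      domainOfDependence f = {p | ⨅ x, g x < ⟪p.1, ξ⟫ - p.2 ∧ ⟪p.1, ξ⟫ - p.2 < ⨆ x, g x} := by
    rw [domainOfDependence_eq_biInter hf hgrad]
    ext p
    simp only [mem_inter_iff, mem_iInter₂, mem_ofPred_eq]
    constructor
    · rintro ⟨hpb, hpa⟩
      exact ⟨hpa (ξ, ⨅ x, g x) ⟨hq.1, fun x => ciInf_le hbddB x⟩,
        hpb (ξ, ⨆ x, g x) ⟨hq.1, fun x => le_ciSup hbddA x⟩⟩
    · rintro ⟨hinf, hsup⟩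
      refine ⟨fun q' hq' => ?_, fun r' hr' => ?_⟩
      · rw [hbelow q' hq']
        exact hsup.trans_le (ciSup_le fun x => by simpa only [hbelow q' hq'] using hq'.2 x)
      · rw [habove r' hr']
        exact (le_ciInf fun x => by simpa only [habove r' hr'] using hr'.2 x).trans_lt hinf
  have hgraph := hslab ▸ mk_mem_domainOfDependence f 0
  exact ⟨_, _, hgraph.1.trans hgraph.2, hslab⟩

end Characterization

section Alternatives

variable {E : Type*} [NormedAddCommGroup E] [InnerProductSpace ℝ E] {S : Set (E × ℝ)}

def IsTimeUpperSet (S : Set (E × ℝ)) : Prop :=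
  ∀ p ∈ S, ∀ s : ℝ, 0 ≤ s → (p.1, p.2 + s) ∈ S

def IsTimeLowerSet (S : Set (E × ℝ)) : Prop :=
  ∀ p ∈ S, ∀ s : ℝ, 0 ≤ s → (p.1, p.2 - s) ∈ S

def nullAlternatives (S : Set (E × ℝ)) : Fin 4 → Prop :=
  ![S = univ,
    (∃ ξ ∈ Metric.sphere (0 : E) 1, ∃ c' c : ℝ, c' < c ∧
      S = {x | c' < ⟪x.1, ξ⟫ - x.2 ∧ ⟪x.1, ξ⟫ - x.2 < c}),
    (∃ F : Set (E × ℝ), F.Nonempty ∧ (∀ p ∈ F, p.1 ∈ Metric.sphere (0 : E) 1) ∧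
      S = ⋂ p ∈ F, {x | ⟪x.1, p.1⟫ - x.2 < p.2}),
    (∃ F : Set (E × ℝ), F.Nonempty ∧ (∀ p ∈ F, p.1 ∈ Metric.sphere (0 : E) 1) ∧
      S = ⋂ p ∈ F, {x | p.2 < ⟪x.1, p.1⟫ - x.2})]

theorem isTimeUpperSet_biInter_future (F : Set (E × ℝ)) :
    IsTimeUpperSet (⋂ q ∈ F, {x : E × ℝ | ⟪x.1, q.1⟫ - x.2 < q.2}) := by
  intro p hp s hs
  simp only [mem_iInter₂, mem_ofPred_eq] at hp ⊢
  exact fun q hq => by linarith [hp q hq]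

theorem isTimeLowerSet_biInter_past (F : Set (E × ℝ)) :
    IsTimeLowerSet (⋂ q ∈ F, {x : E × ℝ | q.2 < ⟪x.1, q.1⟫ - x.2}) := by
  intro p hp s hs
  simp only [mem_iInter₂, mem_ofPred_eq] at hp ⊢
  exact fun q hq => by linarith [hp q hq]

theorem not_isTimeUpperSet_of_subset_past (hS : S.Nonempty) {ξ : E} {c : ℝ}
    (hsub : S ⊆ {x | c < ⟪x.1, ξ⟫ - x.2}) : ¬IsTimeUpperSet S := by
  obtain ⟨p, hp⟩ := hS
  have hc : c < ⟪p.1, ξ⟫ - p.2 := hsub hp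
  intro hup
  have : c < ⟪p.1, ξ⟫ - (p.2 + (⟪p.1, ξ⟫ - p.2 - c)) := hsub (hup p hp _ (by linarith))
  linarith

theorem not_isTimeLowerSet_of_subset_future (hS : S.Nonempty) {ξ : E} {c : ℝ}
    (hsub : S ⊆ {x | ⟪x.1, ξ⟫ - x.2 < c}) : ¬IsTimeLowerSet S := by
  obtain ⟨p, hp⟩ := hS
  have hc : ⟪p.1, ξ⟫ - p.2 < c := hsub hp
  intro hdown
  have : ⟪p.1, ξ⟫ - (p.2 - (c - (⟪p.1, ξ⟫ - p.2))) < c := hsub (hdown p hp _ (by linarith))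
  linarith

theorem nullAlternatives.isTimeUpperSet_iff_and_isTimeLowerSet_iff (hS : S.Nonempty) {i : Fin 4}
    (hi : nullAlternatives S i) :
    (IsTimeUpperSet S ↔ i = 0 ∨ i = 2) ∧ (IsTimeLowerSet S ↔ i = 0 ∨ i = 3) := by
  fin_cases i
  · obtain rfl : S = univ := hi
    exact ⟨iff_of_true (fun _ _ _ _ => trivial) (by decide),
      iff_of_true (fun _ _ _ _ => trivial) (by decide)⟩
  · obtain ⟨ξ, -, c', c, -, rfl⟩ := hi
    exact ⟨iff_of_false (not_isTimeUpperSet_of_subset_past hS fun _ hx => hx.1) (by decide),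
      iff_of_false (not_isTimeLowerSet_of_subset_future hS fun _ hx => hx.2) (by decide)⟩
  · obtain ⟨F, ⟨q, hq⟩, -, rfl⟩ := hi
    exact ⟨iff_of_true (isTimeUpperSet_biInter_future F) (by decide),
      iff_of_false (not_isTimeLowerSet_of_subset_future hS (biInter_subset_of_mem hq))
        (by decide)⟩
  · obtain ⟨F, ⟨q, hq⟩, -, rfl⟩ := hi
    exact ⟨iff_of_false (not_isTimeUpperSet_of_subset_past hS (biInter_subset_of_mem hq))
        (by decide), iff_of_true (isTimeLowerSet_biInter_past F) (by decide)⟩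

theorem nullAlternatives.unique (hS : S.Nonempty) {i j : Fin 4} (hi : nullAlternatives S i)
    (hj : nullAlternatives S j) : i = j := by
  have hi' := nullAlternatives.isTimeUpperSet_iff_and_isTimeLowerSet_iff hS hi
  have hj' := nullAlternatives.isTimeUpperSet_iff_and_isTimeLowerSet_iff hS hj
  rw [hi'.1, hi'.2] at hj'
  fin_cases i <;> fin_cases j <;> simp at hj' ⊢

end Alternatives

/-- the domain of dependence of an entire spacelike graph satisfies
exactly one of the four alternatives: all of ℝ³; the region between two parallel
null planes; an intersection of futures of null planes; or an intersection of pasts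
of null planes. -/
theorem domain_of_dependence_trichotomy
    (f : E2 → ℝ) (hf : ContDiff ℝ 1 f) (hgrad : ∀ x : E2, ‖fderiv ℝ f x‖ < 1)
    (DD : Set M3)
    (hDD : DD = {p : M3 | ∀ c : ℝ → E2, LipschitzWith 1 c → c p.2 = p.1 →
      ∃ t : ℝ, f (c t) = t}) :
    ∃! i : Fin 4,
      ![DD = univ,
        (∃ ξ ∈ S1, ∃ c' c : ℝ, c' < c ∧
          DD = {x : M3 | c' < (inner ℝ x.1 ξ : ℝ) - x.2 ∧ (inner ℝ x.1 ξ : ℝ) - x.2 < c}),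
        (∃ F : Set (E2 × ℝ), F.Nonempty ∧ (∀ p ∈ F, p.1 ∈ S1) ∧
          DD = ⋂ p ∈ F, {x : M3 | (inner ℝ x.1 p.1 : ℝ) - x.2 < p.2}),
        (∃ F : Set (E2 × ℝ), F.Nonempty ∧ (∀ p ∈ F, p.1 ∈ S1) ∧
          DD = ⋂ p ∈ F, {x : M3 | p.2 < (inner ℝ x.1 p.1 : ℝ) - x.2})] i := by
  change ∃! i, nullAlternatives DD i
  have hfd : Differentiable ℝ f := hf.differentiable one_ne_zero
  change DD = domainOfDependence f at hDD
  have hne : DD.Nonempty := ⟨(0, f 0), hDD ▸ mk_mem_domainOfDependence f 0⟩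
  refine existsUnique_of_exists_of_unique ?_ fun i j => nullAlternatives.unique hne
  have hDD' := hDD.trans (domainOfDependence_eq_biInter hfd hgrad)
  rcases (nullPlanesBelow f).eq_empty_or_nonempty with hB | ⟨q, hq⟩ <;>
    rcases (nullPlanesAbove f).eq_empty_or_nonempty with hA | ⟨r, hr⟩
  · exact ⟨0, show DD = univ by simpa [hB, hA] using hDD'⟩
  · exact ⟨3, nullPlanesAbove f, ⟨r, hr⟩, fun _ h => h.1, by simpa [hB] using hDD'⟩
  · exact ⟨2, nullPlanesBelow f, ⟨q, hq⟩, fun _ h => h.1, by simpa [hA] using hDD'⟩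
  · exact ⟨1, q.1, hq.1, hDD ▸ domainOfDependence_eq_slab hfd hgrad hq hr⟩

end
end
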